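/- The sequence λ_n := 1/(H_n - (1/2)ln(n(n+1)) - γ) - 6n(n+1) converges to 6/5 as n → ∞. -/

import Mathlib

/-!
Write `D n = H n - (1/2) log (n(n+1)) - γ` and `x = 1/(n+1)`. Then `D n → 0`, and
`D n - D (n+1) = artanh x - x = x³/3 + x⁵/5 + O(x⁷)`. The model sequence `1/(6n(n+1) + a)` also
tends to `0`, with increments `x³/3 + (3 - a)x⁵/9 + O(x⁷)`; the `x⁵` coefficients agree exactly
for `a = 6/5`. Hence for `a = 6/5 ± ε` the increments of the model lie eventually below,
resp. above, those of `D`, and summing the tails gives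
`1/(6n(n+1) + 6/5 + ε) ≤ D n ≤ 1/(6n(n+1) + 6/5 - ε)` for all large `n`.
-/

open Real Filter Topology

noncomputable def H (n : ℕ) : ℝ := ∑ i ∈ Finset.range n, (1 : ℝ) / (i + 1)

noncomputable def harmonicDeviation (n : ℕ) : ℝ :=
  H n - (1 / 2) * log (n * (n + 1)) - eulerMascheroniConstant

noncomputable def modelDeviation (a : ℝ) (n : ℕ) : ℝ := 1 / (6 * n * (n + 1) + a)

lemma H_eq_harmonic (n : ℕ) : H n = harmonic n := by
  simp [H, harmonic, one_div]

lemma tendsto_harmonicDeviation : Tendsto harmonicDeviation atTop (𝓝 0) := by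
  have h := ((tendsto_harmonic_sub_log.sub_const eulerMascheroniConstant).add
    (tendsto_harmonic_sub_log_add_one.sub_const eulerMascheroniConstant)).const_mul (1 / 2)
  rw [sub_self, add_zero, mul_zero] at h
  refine h.congr' ?_
  filter_upwards [eventually_ne_atTop 0] with n hn
  rw [harmonicDeviation, H_eq_harmonic, log_mul (Nat.cast_ne_zero.mpr hn) (by positivity)]
  ring

lemma harmonicDeviation_sub_succ {n : ℕ} (hn : 1 ≤ n) :
    harmonicDeviation n - harmonicDeviation (n + 1) =
      (1 / 2) * (log (1 + ((n : ℝ) + 1)⁻¹) - log (1 - ((n : ℝ) + 1)⁻¹)) - ((n : ℝ) + 1)⁻¹ := by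
  have hn0 : (0 : ℝ) < n := by exact_mod_cast hn
  have h1 : (1 : ℝ) + ((n : ℝ) + 1)⁻¹ = (n + 2) / (n + 1) := by field_simp; ring
  have h2 : (1 : ℝ) - ((n : ℝ) + 1)⁻¹ = n / (n + 1) := by field_simp; ring
  rw [h1, h2, log_div (by positivity) (by positivity), log_div hn0.ne' (by positivity)]
  simp only [harmonicDeviation, H, Finset.sum_range_succ]
  push_cast
  rw [log_mul hn0.ne' (by positivity), log_mul (by positivity) (by positivity)]
  ring_nf

lemma abs_half_log_sub_log_sub_le {x : ℝ} (hx : 0 < x) (hx2 : x ≤ 1 / 2) :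
    |(1 / 2) * (log (1 + x) - log (1 - x)) - (x + x ^ 3 / 3 + x ^ 5 / 5)| ≤ 2 * x ^ 7 := by
  have hx1 : |x| < 1 := by rw [abs_of_pos hx]; linarith
  have hplus := abs_log_sub_add_sum_range_le (x := -x) (by rwa [abs_neg]) 6
  have hminus := abs_log_sub_add_sum_range_le hx1 6
  simp only [abs_neg, abs_of_pos hx, sub_neg_eq_add, Finset.sum_range_succ,
    Finset.sum_range_zero] at hplus hminus
  norm_num at hplus hminus
  have hrem : x ^ 7 / (1 - x) ≤ 2 * x ^ 7 := by
    rw [div_le_iff₀ (by linarith)]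
    nlinarith [pow_pos hx 7]
  rw [abs_le] at hplus hminus ⊢
  constructor <;> linarith

lemma abs_harmonicDeviation_sub_succ_sub_le {n : ℕ} (hn : 1 ≤ n) :
    |harmonicDeviation n - harmonicDeviation (n + 1) -
        (((n : ℝ) + 1)⁻¹ ^ 3 / 3 + ((n : ℝ) + 1)⁻¹ ^ 5 / 5)| ≤ 2 * ((n : ℝ) + 1)⁻¹ ^ 7 := by
  have hx : 0 < ((n : ℝ) + 1)⁻¹ := by positivity
  have hx2 : ((n : ℝ) + 1)⁻¹ ≤ 1 / 2 := by
    have : (1 : ℝ) ≤ n := by exact_mod_cast hn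
    rw [inv_le_comm₀ (by positivity) (by norm_num)]
    norm_num
    linarith
  rw [harmonicDeviation_sub_succ hn, sub_sub, ← add_assoc]
  exact abs_half_log_sub_log_sub_le hx hx2

lemma modelDeviation_sub_succ {a : ℝ} (ha : 0 < a) (n : ℕ) :
    modelDeviation a n - modelDeviation a (n + 1) =
      ((n : ℝ) + 1)⁻¹ ^ 3 *
        (12 / ((6 + a * ((n : ℝ) + 1)⁻¹ ^ 2) ^ 2 - 36 * ((n : ℝ) + 1)⁻¹ ^ 2)) := by
  have hden : (6 + a * ((n : ℝ) + 1)⁻¹ ^ 2) ^ 2 - 36 * ((n : ℝ) + 1)⁻¹ ^ 2 =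
      (6 * n * (n + 1) + a) * (6 * (n + 1) * (n + 1 + 1) + a) * ((n : ℝ) + 1)⁻¹ ^ 4 := by
    field_simp
    ring
  have hpos : 0 < (6 * n * (n + 1) + a) * (6 * (n + 1) * (n + 1 + 1) + a) := by positivity
  rw [hden, modelDeviation, modelDeviation]
  push_cast
  field_simp
  ring

lemma tendsto_modelDeviation (a : ℝ) : Tendsto (modelDeviation a) atTop (𝓝 0) := by
  have hcast := tendsto_natCast_atTop_atTop (R := ℝ)
  have hden : Tendsto (fun n : ℕ ↦ 6 * (n : ℝ) * (n + 1) + a) atTop atTop :=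
    tendsto_atTop_add_const_right _ a ((hcast.const_mul_atTop (by norm_num)).atTop_mul_atTop₀
      (tendsto_atTop_add_const_right _ 1 hcast))
  exact hden.inv_tendsto_atTop.congr fun n ↦ (one_div _).symm

lemma twelve_div_le_of_le_div_twenty {ε y : ℝ} (hε : 0 < ε) (hε1 : ε ≤ 1) (hy : 0 ≤ y)
    (hyε : y ≤ ε / 20) :
    12 / ((6 + (6 / 5 + ε) * y) ^ 2 - 36 * y) ≤ 1 / 3 + y / 5 - 2 * y ^ 2 := by
  set a := 6 / 5 + ε with ha
  have hy1 : y ≤ 1 / 20 := by linarith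
  have hay0 : 0 ≤ a * y := mul_nonneg (by linarith) hy
  have hay1 : a * y ≤ 1 / 2 := by nlinarith
  rw [div_le_iff₀ (by nlinarith)]
  have hc2 : -76 ≤ a ^ 2 / 3 + (12 * a - 36) / 5 - 72 := by nlinarith
  have hc3 : 0 ≤ a ^ 2 / 5 - 24 * a + 72 := by nlinarith
  have hc4 : 2 * a ^ 2 * y ^ 2 ≤ 1 := by nlinarith [mul_le_mul hay1 hay1 hay0 (by norm_num)]
  have hexp : (1 / 3 + y / 5 - 2 * y ^ 2) * ((6 + a * y) ^ 2 - 36 * y) - 12 =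
      y * (4 * ε + y * ((a ^ 2 / 3 + (12 * a - 36) / 5 - 72) + (a ^ 2 / 5 - 24 * a + 72) * y
        - 2 * a ^ 2 * y ^ 2)) := by
    rw [ha]; ring
  have hinner : 0 ≤ 4 * ε + y * ((a ^ 2 / 3 + (12 * a - 36) / 5 - 72)
      + (a ^ 2 / 5 - 24 * a + 72) * y - 2 * a ^ 2 * y ^ 2) := by
    nlinarith [mul_nonneg hc3 hy]
  nlinarith [mul_nonneg hy hinner]

lemma le_twelve_div_of_le_div_twenty {ε y : ℝ} (hε : 0 < ε) (hε1 : ε ≤ 1) (hy : 0 ≤ y)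
    (hyε : y ≤ ε / 20) :
    1 / 3 + y / 5 + 2 * y ^ 2 ≤ 12 / ((6 + (6 / 5 - ε) * y) ^ 2 - 36 * y) := by
  set a := 6 / 5 - ε with ha
  have hy1 : y ≤ 1 / 20 := by linarith
  have hay0 : 0 ≤ a * y := mul_nonneg (by linarith) hy
  have hay1 : a * y ≤ 1 / 2 := by nlinarith
  rw [le_div_iff₀ (by nlinarith)]
  have hc2 : a ^ 2 / 3 + (12 * a - 36) / 5 + 72 ≤ 69 := by nlinarith
  have hc3 : a ^ 2 / 5 + 24 * a - 72 ≤ 0 := by nlinarith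
  have hc4 : 2 * a ^ 2 * y ^ 2 ≤ 1 := by nlinarith [mul_le_mul hay1 hay1 hay0 (by norm_num)]
  have hexp : 12 - (1 / 3 + y / 5 + 2 * y ^ 2) * ((6 + a * y) ^ 2 - 36 * y) =
      y * (4 * ε - y * ((a ^ 2 / 3 + (12 * a - 36) / 5 + 72) + (a ^ 2 / 5 + 24 * a - 72) * y
        + 2 * a ^ 2 * y ^ 2)) := by
    rw [ha]; ring
  have hinner : 0 ≤ 4 * ε - y * ((a ^ 2 / 3 + (12 * a - 36) / 5 + 72)
      + (a ^ 2 / 5 + 24 * a - 72) * y + 2 * a ^ 2 * y ^ 2) := by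
    nlinarith [mul_nonpos_of_nonpos_of_nonneg hc3 hy]
  nlinarith [mul_nonneg hy hinner]

lemma Filter.Tendsto.le_of_forall_sub_succ_le {α : Type*} [AddCommGroup α] [LinearOrder α]
    [IsOrderedAddMonoid α] [TopologicalSpace α] [OrderClosedTopology α] [IsTopologicalAddGroup α]
    {u v : ℕ → α} {l : α} (hu : Tendsto u atTop (𝓝 l)) (hv : Tendsto v atTop (𝓝 l)) {n : ℕ}
    (h : ∀ k ≥ n, u k - u (k + 1) ≤ v k - v (k + 1)) : u n ≤ v n := by
  have hanti : Antitone fun k ↦ v (k + n) - u (k + n) := by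
    refine antitone_nat_of_succ_le fun k ↦ ?_
    have := h (k + n) (Nat.le_add_left n k)
    rw [add_right_comm, sub_le_sub_iff, add_comm (v _)]
    rwa [sub_le_sub_iff] at this
  have hlim : Tendsto (fun k ↦ v (k + n) - u (k + n)) atTop (𝓝 0) := by
    simpa using (tendsto_add_atTop_iff_nat n).2 (hv.sub hu)
  simpa using hanti.le_of_tendsto hlim 0

lemma inv_succ_le_div_twenty {ε : ℝ} (hε : 0 < ε) {n : ℕ} (hn : 20 / ε ≤ n + 1) :
    ((n : ℝ) + 1)⁻¹ ≤ ε / 20 := by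
  rw [inv_le_comm₀ (by positivity) (by positivity), inv_div]
  exact hn

lemma one_le_of_twenty_div_le {ε : ℝ} (hε : 0 < ε) (hε1 : ε ≤ 1) {n : ℕ}
    (hn : 20 / ε ≤ n + 1) : 1 ≤ n := by
  have : (20 : ℝ) ≤ 20 / ε := by rw [le_div_iff₀ hε]; linarith
  exact_mod_cast (by linarith : (1 : ℝ) ≤ n)

lemma modelDeviation_sub_succ_le_harmonicDeviation_sub_succ {ε : ℝ} (hε : 0 < ε) (hε1 : ε ≤ 1)
    {n : ℕ} (hn : 20 / ε ≤ n + 1) :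
    modelDeviation (6 / 5 + ε) n - modelDeviation (6 / 5 + ε) (n + 1) ≤
      harmonicDeviation n - harmonicDeviation (n + 1) := by
  set x := ((n : ℝ) + 1)⁻¹
  have hx : 0 < x := by positivity
  have hxε : x ≤ ε / 20 := inv_succ_le_div_twenty hε hn
  have hpoly := twelve_div_le_of_le_div_twenty hε hε1 (sq_nonneg x) (by nlinarith)
  have htaylor := (abs_le.1 (abs_harmonicDeviation_sub_succ_sub_le
    (one_le_of_twenty_div_le hε hε1 hn))).1
  rw [modelDeviation_sub_succ (by positivity)]
  calc x ^ 3 * (12 / ((6 + (6 / 5 + ε) * x ^ 2) ^ 2 - 36 * x ^ 2))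
      ≤ x ^ 3 * (1 / 3 + x ^ 2 / 5 - 2 * (x ^ 2) ^ 2) := by gcongr
    _ = x ^ 3 / 3 + x ^ 5 / 5 - 2 * x ^ 7 := by ring
    _ ≤ harmonicDeviation n - harmonicDeviation (n + 1) := by linarith

lemma harmonicDeviation_sub_succ_le_modelDeviation_sub_succ {ε : ℝ} (hε : 0 < ε) (hε1 : ε ≤ 1)
    {n : ℕ} (hn : 20 / ε ≤ n + 1) :
    harmonicDeviation n - harmonicDeviation (n + 1) ≤
      modelDeviation (6 / 5 - ε) n - modelDeviation (6 / 5 - ε) (n + 1) := by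
  set x := ((n : ℝ) + 1)⁻¹
  have hx : 0 < x := by positivity
  have hxε : x ≤ ε / 20 := inv_succ_le_div_twenty hε hn
  have hpoly := le_twelve_div_of_le_div_twenty hε hε1 (sq_nonneg x) (by nlinarith)
  have htaylor := (abs_le.1 (abs_harmonicDeviation_sub_succ_sub_le
    (one_le_of_twenty_div_le hε hε1 hn))).2
  rw [modelDeviation_sub_succ (by linarith)]
  calc harmonicDeviation n - harmonicDeviation (n + 1)
      ≤ x ^ 3 / 3 + x ^ 5 / 5 + 2 * x ^ 7 := by linarith
    _ = x ^ 3 * (1 / 3 + x ^ 2 / 5 + 2 * (x ^ 2) ^ 2) := by ring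
    _ ≤ x ^ 3 * (12 / ((6 + (6 / 5 - ε) * x ^ 2) ^ 2 - 36 * x ^ 2)) := by gcongr

lemma modelDeviation_le_harmonicDeviation {ε : ℝ} (hε : 0 < ε) (hε1 : ε ≤ 1) {n : ℕ}
    (hn : 20 / ε ≤ n + 1) : modelDeviation (6 / 5 + ε) n ≤ harmonicDeviation n :=
  (tendsto_modelDeviation _).le_of_forall_sub_succ_le tendsto_harmonicDeviation fun _ hk ↦
    modelDeviation_sub_succ_le_harmonicDeviation_sub_succ hε hε1 (hn.trans (by gcongr))

lemma harmonicDeviation_le_modelDeviation {ε : ℝ} (hε : 0 < ε) (hε1 : ε ≤ 1) {n : ℕ}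
    (hn : 20 / ε ≤ n + 1) : harmonicDeviation n ≤ modelDeviation (6 / 5 - ε) n :=
  tendsto_harmonicDeviation.le_of_forall_sub_succ_le (tendsto_modelDeviation _) fun _ hk ↦
    harmonicDeviation_sub_succ_le_modelDeviation_sub_succ hε hε1 (hn.trans (by gcongr))

lemma abs_one_div_harmonicDeviation_sub_le {ε : ℝ} (hε : 0 < ε) (hε1 : ε ≤ 1) {n : ℕ}
    (hn : 20 / ε ≤ n + 1) : |1 / harmonicDeviation n - 6 * n * (n + 1) - 6 / 5| ≤ ε := by
  have hlow := modelDeviation_le_harmonicDeviation hε hε1 hn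
  have hup := harmonicDeviation_le_modelDeviation hε hε1 hn
  have hmodel : 0 < modelDeviation (6 / 5 + ε) n := by
    rw [modelDeviation]; positivity
  have h1 := one_div_le_one_div_of_le hmodel hlow
  have h2 := one_div_le_one_div_of_le (hmodel.trans_le hlow) hup
  rw [modelDeviation, one_div_one_div] at h1 h2
  rw [abs_le]
  constructor <;> linarith

theorem stmt6 :
    Tendsto (fun n : ℕ => 1 / (H n - (1 / 2) * Real.log (n * (n + 1)) - Real.eulerMascheroniConstant) - 6 * n * (n + 1))
      atTop (nhds (6 / 5)) := by
  rw [Metric.tendsto_nhds]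
  intro ε hε
  set δ := min (ε / 2) 1
  have hδ : 0 < δ := lt_min (by linarith) one_pos
  have hδε : δ < ε := (min_le_left _ _).trans_lt (by linarith)
  filter_upwards [tendsto_natCast_atTop_atTop.eventually_ge_atTop (20 / δ)] with n hn
  rw [Real.dist_eq]
  exact (abs_one_div_harmonicDeviation_sub_le hδ (min_le_right _ _) (by linarith)).trans_lt hδε
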